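/- Let N = 1, Ω = (a,b) ⊂ ℝ, and let k ≥ 1 be an integer. For r > 0 define c_{k+1}(r) := inf over a = t₀ < t₁ < … < t_k < t_{k+1} = b of max_i {rλ₁(t_{2i+1} − t_{2i}), λ₁(t_{2i+2} − t_{2i+1})}. Then the pair (r⁻¹c_{k+1}(r), c_{k+1}(r)) belongs to the Fučík spectrum F of −d²/dx² on H¹₀((a,b)). -/

import Mathlib

open Set
noncomputable section

/-- First Dirichlet eigenvalue of `-d²/dx²` on an interval of length `ℓ`:
`λ₁(ℓ) = π²/ℓ²`. -/
def lam1d (ℓ : ℝ) : ℝ := Real.pi ^ 2 / ℓ ^ 2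

/-- The value `max_i {rλ₁(t_{2i+1} − t_{2i}), λ₁(t_{2i+2} − t_{2i+1})}`
associated with a subdivision `t` of `[a,b]` into `k+1` intervals. -/
def fucikVal (r : ℝ) (k : ℕ) (t : ℕ → ℝ) : ℝ :=
  sSup ({ v : ℝ | ∃ i : ℕ, 2 * i + 1 ≤ k + 1 ∧ v = r * lam1d (t (2 * i + 1) - t (2 * i)) } ∪
        { v : ℝ | ∃ i : ℕ, 2 * i + 2 ≤ k + 1 ∧ v = lam1d (t (2 * i + 2) - t (2 * i + 1)) })

/-- `c_{k+1}(r) := inf over a = t₀ < t₁ < … < t_k < t_{k+1} = b` of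
`max_i {rλ₁(t_{2i+1} − t_{2i}), λ₁(t_{2i+2} − t_{2i+1})}`. -/
def ckr (a b : ℝ) (k : ℕ) (r : ℝ) : ℝ :=
  sInf { v : ℝ | ∃ t : ℕ → ℝ, t 0 = a ∧ t (k + 1) = b ∧
    (∀ i j : ℕ, i < j → j ≤ k + 1 → t i < t j) ∧ v = fucikVal r k t }

/-- `(lm, μ)` belongs to the Fučík spectrum of `-d²/dx²` on `H¹₀((a,b))`:
`−u'' = lm·u⁺ − μ·u⁻` on `(a,b)`, `u(a) = u(b) = 0`, has a nontrivial solution. -/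
def InFucik1D (a b : ℝ) (lm μ : ℝ) : Prop :=
  ∃ u : ℝ → ℝ, ContDiff ℝ 2 u ∧ u a = 0 ∧ u b = 0 ∧
    (∃ x ∈ Set.Ioo a b, u x ≠ 0) ∧
    ∀ x ∈ Set.Ioo a b,
      -(deriv (deriv u) x) = lm * max (u x) 0 - μ * max (-u x) 0

/-!
Give the pieces of a partition the weights `w j = r` (even `j`) and `w j = 1` (odd `j`). Since the
lengths add up to `b - a`, some piece is no longer than the length `ℓ j` that makes all the
products `w j * λ₁(ℓ j)` equal to a common value `c`; so every partition has value at least `c`,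
and the equalizing partition attains it: `c = c_{k+1}(r)`. On that partition the even pieces have
`λ₁ = r⁻¹ c` and the odd ones `λ₁ = c`, and sine arches on the pieces, positive on the even and
negative on the odd ones, glue into a `C²` solution of `-u'' = r⁻¹ c u⁺ - c u⁻`.
-/

open Finset Real

section Gluing

variable {E : Type*} [NormedAddCommGroup E] [NormedSpace ℝ E] {f g : ℝ → E} {s : ℝ}

theorem hasDerivAt_ite_le (hf : Differentiable ℝ f) (hg : Differentiable ℝ g) (h₀ : f s = g s)
    (h₁ : deriv f s = deriv g s) (x : ℝ) :
    HasDerivAt (fun y => if y ≤ s then f y else g y)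
      (if x ≤ s then deriv f x else deriv g x) x := by
  rcases lt_trichotomy x s with hx | rfl | hx
  · rw [if_pos hx.le]
    refine (hf x).hasDerivAt.congr_of_eventuallyEq ?_
    filter_upwards [Iio_mem_nhds hx] with y hy
    rw [if_pos (le_of_lt hy)]
  · have hleft : HasDerivWithinAt (fun y => if y ≤ x then f y else g y) (deriv f x) (Iic x) x :=
      (hf x).hasDerivAt.hasDerivWithinAt.congr (fun y hy => if_pos hy) (if_pos le_rfl)
    have hright :
        HasDerivWithinAt (fun y => if y ≤ x then f y else g y) (deriv f x) (Ici x) x := by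
      refine h₁ ▸ (hg x).hasDerivAt.hasDerivWithinAt.congr (fun y hy => ?_) (by simp [h₀])
      rcases (mem_Ici.mp hy).eq_or_lt with rfl | hy
      · simp [h₀]
      · exact if_neg (not_le.mpr hy)
    rw [if_pos le_rfl]
    simpa [Iic_union_Ici] using (hleft.union hright).hasDerivAt (by simp)
  · rw [if_neg (not_le.mpr hx)]
    refine (hg x).hasDerivAt.congr_of_eventuallyEq ?_
    filter_upwards [Ioi_mem_nhds hx] with y hy
    rw [if_neg (not_le.mpr hy)]

theorem contDiff_ite_le {n : ℕ} (hf : ContDiff ℝ n f) (hg : ContDiff ℝ n g)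
    (h : ∀ m ≤ n, iteratedDeriv m f s = iteratedDeriv m g s) :
    ContDiff ℝ n (fun y => if y ≤ s then f y else g y) ∧
      ∀ m ≤ n, iteratedDeriv m (fun y => if y ≤ s then f y else g y) =
        fun y => if y ≤ s then iteratedDeriv m f y else iteratedDeriv m g y := by
  induction n generalizing f g with
  | zero =>
    refine ⟨contDiff_zero.mpr (hf.continuous.if_le hg.continuous continuous_id continuous_const
      fun x hx => by simpa [hx] using h 0 le_rfl), fun m hm => ?_⟩
    obtain rfl := Nat.le_zero.mp hm
    simp
  | succ n ih =>
    rw [Nat.cast_succ] at hf hg ⊢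
    have hf' := contDiff_succ_iff_deriv.mp hf
    have hg' := contDiff_succ_iff_deriv.mp hg
    have h₀ : f s = g s := by simpa using h 0 (by omega)
    have h₁ : deriv f s = deriv g s := by simpa using h 1 (by omega)
    have hderiv : deriv (fun y => if y ≤ s then f y else g y) =
        fun y => if y ≤ s then deriv f y else deriv g y :=
      funext fun x => (hasDerivAt_ite_le hf'.1 hg'.1 h₀ h₁ x).deriv
    obtain ⟨hcont, hiter⟩ := ih hf'.2.2 hg'.2.2 fun m hm => by
      simpa only [iteratedDeriv_succ'] using h (m + 1) (by omega)
    refine ⟨contDiff_succ_iff_deriv.mpr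
      ⟨fun x => (hasDerivAt_ite_le hf'.1 hg'.1 h₀ h₁ x).differentiableAt, by simp, hderiv ▸ hcont⟩,
      fun m hm => ?_⟩
    cases m with
    | zero => simp
    | succ m => simpa only [iteratedDeriv_succ', hderiv] using hiter m (by omega)

theorem exists_contDiff_gluing {n : ℕ} (k : ℕ) {t : ℕ → ℝ} (ht : Monotone t) {F : ℕ → ℝ → E}
    (hF : ∀ i ≤ k, ContDiff ℝ n (F i))
    (hnode : ∀ i < k, ∀ m ≤ n,
      iteratedDeriv m (F i) (t (i + 1)) = iteratedDeriv m (F (i + 1)) (t (i + 1))) :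
    ∃ u : ℝ → E, ContDiff ℝ n u ∧ ∀ i ≤ k, ∀ x ∈ Icc (t i) (t (i + 1)), ∀ m ≤ n,
      iteratedDeriv m u x = iteratedDeriv m (F i) x := by
  induction k generalizing t F with
  | zero =>
    refine ⟨F 0, hF 0 le_rfl, fun i hi x _ m _ => ?_⟩
    rw [Nat.le_zero.mp hi]
  | succ k ih =>
    obtain ⟨v, hv, hvF⟩ := ih (t := fun i => t (i + 1)) (F := fun i => F (i + 1))
      (fun _ _ h => ht (by omega)) (fun i hi => hF (i + 1) (by omega))
      (fun i hi => hnode (i + 1) (by omega))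
    have hv₁ : ∀ m ≤ n, iteratedDeriv m v (t 1) = iteratedDeriv m (F 1) (t 1) :=
      hvF 0 (Nat.zero_le k) (t 1) ⟨le_rfl, ht (by omega)⟩
    have hjoin : ∀ m ≤ n, iteratedDeriv m (F 0) (t 1) = iteratedDeriv m v (t 1) := fun m hm =>
      (hnode 0 (by omega) m hm).trans (hv₁ m hm).symm
    obtain ⟨hu, hiter⟩ := contDiff_ite_le (hF 0 (Nat.zero_le _)) hv hjoin
    refine ⟨_, hu, fun i hi x hx m hm => ?_⟩
    rw [hiter m hm]
    rcases i with _ | j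
    · simp [hx.2]
    · have h1x : t 1 ≤ x := (ht (by omega)).trans hx.1
      dsimp only
      split_ifs with hx1
      · obtain rfl : x = t 1 := le_antisymm hx1 h1x
        rw [hjoin m hm]
        exact hvF j (by omega) _ hx m hm
      · exact hvF j (by omega) x hx m hm

end Gluing

theorem lam1d_le_lam1d {x y : ℝ} (hx : 0 < x) (hxy : x ≤ y) : lam1d y ≤ lam1d x :=
  div_le_div_of_nonneg_left (sq_nonneg _) (pow_pos hx 2) (pow_le_pow_left₀ hx.le hxy 2)

def fucikWeight (r : ℝ) (j : ℕ) : ℝ := if Even j then r else 1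

theorem fucikWeight_pos {r : ℝ} (hr : 0 < r) (j : ℕ) : 0 < fucikWeight r j := by
  unfold fucikWeight
  split_ifs <;> positivity

theorem fucikVal_eq_sup' (r : ℝ) (k : ℕ) (t : ℕ → ℝ) :
    fucikVal r k t = (range (k + 1)).sup' nonempty_range_add_one
      fun j => fucikWeight r j * lam1d (t (j + 1) - t j) := by
  rw [sup'_eq_csSup_image, fucikVal]
  congr 1
  ext v
  simp only [Set.mem_union, Set.mem_ofPred_eq, coe_range, Set.mem_image, Set.mem_Iio, fucikWeight]
  constructor
  · rintro (⟨i, hi, rfl⟩ | ⟨i, hi, rfl⟩)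
    · exact ⟨2 * i, by omega, by simp⟩
    · exact ⟨2 * i + 1, by omega, by simp [Nat.not_even_bit1]⟩
  · rintro ⟨j, hj, rfl⟩
    obtain ⟨i, rfl | rfl⟩ := Nat.even_or_odd' j
    · exact Or.inl ⟨i, by omega, by simp⟩
    · exact Or.inr ⟨i, by omega, by simp [Nat.not_even_bit1]⟩

def partitionOfLengths (a : ℝ) (ℓ : ℕ → ℝ) (j : ℕ) : ℝ := a + ∑ i ∈ range j, ℓ i

@[simp]
theorem partitionOfLengths_zero (a : ℝ) (ℓ : ℕ → ℝ) : partitionOfLengths a ℓ 0 = a := by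
  simp [partitionOfLengths]

theorem partitionOfLengths_succ_sub (a : ℝ) (ℓ : ℕ → ℝ) (j : ℕ) :
    partitionOfLengths a ℓ (j + 1) - partitionOfLengths a ℓ j = ℓ j := by
  simp [partitionOfLengths, sum_range_succ]

theorem strictMono_partitionOfLengths (a : ℝ) {ℓ : ℕ → ℝ} (hℓ : ∀ j, 0 < ℓ j) :
    StrictMono (partitionOfLengths a ℓ) :=
  strictMono_nat_of_lt_succ fun j => sub_pos.mp (partitionOfLengths_succ_sub a ℓ j ▸ hℓ j)

section WeightedPartition

variable (a b : ℝ) (k : ℕ) (w : ℕ → ℝ)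

/-- Equalizing `w j * λ₁(ℓ j) = c` forces `ℓ j = π √(w j / c)`; the constraint `∑ ℓ j = b - a`
then determines `c`. -/
def optimalLength (j : ℕ) : ℝ := (b - a) * √(w j) / ∑ i ∈ range (k + 1), √(w i)

def optimalValue : ℝ := (π * (∑ i ∈ range (k + 1), √(w i)) / (b - a)) ^ 2

variable {a b k w}

theorem sum_range_sqrt_pos (k : ℕ) (hw : ∀ j, 0 < w j) : 0 < ∑ i ∈ range (k + 1), √(w i) :=
  sum_pos (fun i _ => Real.sqrt_pos.mpr (hw i)) nonempty_range_add_one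

theorem sum_optimalLength (hw : ∀ j, 0 < w j) :
    ∑ j ∈ range (k + 1), optimalLength a b k w j = b - a := by
  have hS := sum_range_sqrt_pos k hw
  simp only [optimalLength, ← sum_div, ← mul_sum]
  field_simp

theorem optimalLength_pos (hab : a < b) (hw : ∀ j, 0 < w j) (j : ℕ) :
    0 < optimalLength a b k w j := by
  have hS := sum_range_sqrt_pos k hw
  unfold optimalLength
  have := Real.sqrt_pos.mpr (hw j)
  have := sub_pos.mpr hab
  positivity

theorem mul_lam1d_optimalLength (hab : a < b) (hw : ∀ j, 0 < w j) (j : ℕ) :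
    w j * lam1d (optimalLength a b k w j) = optimalValue a b k w := by
  have hS := sum_range_sqrt_pos k hw
  have hba : b - a ≠ 0 := (sub_pos.mpr hab).ne'
  simp only [lam1d, optimalLength, optimalValue, div_pow, mul_pow, Real.sq_sqrt (hw j).le]
  field_simp [(hw j).ne']

theorem partitionOfLengths_optimalLength_add_one (hw : ∀ j, 0 < w j) :
    partitionOfLengths a (optimalLength a b k w) (k + 1) = b := by
  rw [partitionOfLengths, sum_optimalLength hw]
  ring

theorem isLeast_optimalValue (hab : a < b) (hw : ∀ j, 0 < w j) :
    IsLeast {v | ∃ t : ℕ → ℝ, t 0 = a ∧ t (k + 1) = b ∧ (∀ i j, i < j → j ≤ k + 1 → t i < t j) ∧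
      v = (range (k + 1)).sup' nonempty_range_add_one fun j => w j * lam1d (t (j + 1) - t j)}
      (optimalValue a b k w) := by
  refine ⟨⟨partitionOfLengths a (optimalLength a b k w), partitionOfLengths_zero _ _,
    partitionOfLengths_optimalLength_add_one hw,
    fun i j hij _ => strictMono_partitionOfLengths a (optimalLength_pos hab hw) hij, ?_⟩, ?_⟩
  · simp only [partitionOfLengths_succ_sub, mul_lam1d_optimalLength hab hw, sup'_const]
  · rintro v ⟨t, h0, hk, ht, rfl⟩
    have hsum : ∑ j ∈ range (k + 1), (t (j + 1) - t j) ≤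
        ∑ j ∈ range (k + 1), optimalLength a b k w j := by
      rw [sum_range_sub t, sum_optimalLength hw, h0, hk]
    obtain ⟨j, hj, hle⟩ := exists_le_of_sum_le nonempty_range_add_one hsum
    have hpos : 0 < t (j + 1) - t j :=
      sub_pos.mpr (ht j (j + 1) j.lt_succ_self (Nat.succ_le_of_lt (mem_range.mp hj)))
    calc optimalValue a b k w = w j * lam1d (optimalLength a b k w j) :=
          (mul_lam1d_optimalLength hab hw j).symm
      _ ≤ w j * lam1d (t (j + 1) - t j) :=
          mul_le_mul_of_nonneg_left (lam1d_le_lam1d hpos hle) (hw j).le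
      _ ≤ _ := le_sup' (fun j => w j * lam1d (t (j + 1) - t j)) hj

end WeightedPartition

theorem ckr_eq_optimalValue {a b r : ℝ} (k : ℕ) (hab : a < b) (hr : 0 < r) :
    ckr a b k r = optimalValue a b k (fucikWeight r) := by
  simp only [ckr, fucikVal_eq_sup']
  exact (isLeast_optimalValue hab (fucikWeight_pos hr)).csInf_eq

theorem hasDerivAt_mul_sin (c q d x : ℝ) :
    HasDerivAt (fun y => c * sin (q * (y - d))) (c * q * cos (q * (x - d))) x := by
  have := (((hasDerivAt_id x).sub_const d).const_mul q).sin.const_mul c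
  simpa [mul_comm, mul_left_comm, mul_assoc] using this

theorem hasDerivAt_mul_cos (c q d x : ℝ) :
    HasDerivAt (fun y => c * cos (q * (y - d))) (-(c * q * sin (q * (x - d)))) x := by
  have := (((hasDerivAt_id x).sub_const d).const_mul q).cos.const_mul c
  simpa [mul_comm, mul_left_comm, mul_assoc] using this

theorem iteratedDeriv_one_mul_sin (c q d : ℝ) :
    iteratedDeriv 1 (fun y => c * sin (q * (y - d))) = fun x => c * q * cos (q * (x - d)) := by
  rw [iteratedDeriv_one]
  exact funext fun x => (hasDerivAt_mul_sin c q d x).deriv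

theorem iteratedDeriv_two_mul_sin (c q d : ℝ) :
    iteratedDeriv 2 (fun y => c * sin (q * (y - d))) =
      fun x => -(q ^ 2 * (c * sin (q * (x - d)))) := by
  rw [iteratedDeriv_succ, iteratedDeriv_one_mul_sin]
  funext x
  rw [(hasDerivAt_mul_cos (c * q) q d x).deriv]
  ring

theorem contDiff_mul_sin (c q d : ℝ) {n : WithTop ℕ∞} :
    ContDiff ℝ n fun y => c * sin (q * (y - d)) := by
  fun_prop

section AlternatingArch

variable (t : ℕ → ℝ) (j : ℕ)

def archFreq : ℝ := π / (t (j + 1) - t j)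

/-- The amplitude `1 / archFreq t j` makes the slope `±1` at both ends, so consecutive arches
agree to second order at the nodes. -/
def alternatingArch : ℝ → ℝ := fun x => (-1) ^ j / archFreq t j * sin (archFreq t j * (x - t j))

variable {t j}

theorem archFreq_pos (hj : t j < t (j + 1)) : 0 < archFreq t j :=
  div_pos pi_pos (sub_pos.mpr hj)

theorem archFreq_mul_sub (hj : t j < t (j + 1)) : archFreq t j * (t (j + 1) - t j) = π :=
  div_mul_cancel₀ _ (sub_pos.mpr hj).ne'

theorem archFreq_sq : archFreq t j ^ 2 = lam1d (t (j + 1) - t j) :=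
  div_pow _ _ _

theorem iteratedDeriv_alternatingArch_node (hj : t j < t (j + 1)) (hj' : t (j + 1) < t (j + 2))
    {m : ℕ} (hm : m ≤ 2) :
    iteratedDeriv m (alternatingArch t j) (t (j + 1)) =
      iteratedDeriv m (alternatingArch t (j + 1)) (t (j + 1)) := by
  have hq := (archFreq_pos hj).ne'
  have hq' := (archFreq_pos hj').ne'
  have hend := archFreq_mul_sub hj
  unfold alternatingArch
  interval_cases m
  · simp [hend]
  · rw [iteratedDeriv_one_mul_sin, iteratedDeriv_one_mul_sin]
    simp [hend, hq, hq', pow_succ]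
  · rw [iteratedDeriv_two_mul_sin, iteratedDeriv_two_mul_sin]
    simp [hend]

theorem neg_iteratedDeriv_two_alternatingArch (x : ℝ) :
    -iteratedDeriv 2 (alternatingArch t j) x = lam1d (t (j + 1) - t j) * alternatingArch t j x := by
  unfold alternatingArch
  rw [iteratedDeriv_two_mul_sin, archFreq_sq, neg_neg]

theorem neg_one_pow_mul_alternatingArch_nonneg (hj : t j < t (j + 1)) {x : ℝ}
    (hx : x ∈ Icc (t j) (t (j + 1))) : 0 ≤ (-1) ^ j * alternatingArch t j x := by
  have hq := archFreq_pos hj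
  have hsin : 0 ≤ sin (archFreq t j * (x - t j)) := by
    refine sin_nonneg_of_nonneg_of_le_pi (mul_nonneg hq.le (sub_nonneg.mpr hx.1)) ?_
    rw [← archFreq_mul_sub hj]
    exact mul_le_mul_of_nonneg_left (by linarith [hx.2]) hq.le
  have hsq : ((-1 : ℝ) ^ j) ^ 2 = 1 := by rw [← pow_mul, mul_comm, pow_mul]; simp
  rw [alternatingArch, ← mul_assoc, mul_div_assoc', ← sq, hsq]
  positivity

theorem alternatingArch_midpoint (hj : t j < t (j + 1)) :
    alternatingArch t j ((t j + t (j + 1)) / 2) = (-1) ^ j / archFreq t j := by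
  have harg : archFreq t j * ((t j + t (j + 1)) / 2 - t j) = π / 2 := by
    rw [← archFreq_mul_sub hj]
    ring
  rw [alternatingArch, harg, sin_pi_div_two, mul_one]

end AlternatingArch

theorem exists_mem_Icc_of_mem_Icc {α : Type*} [LinearOrder α] (t : ℕ → α) {x : α} :
    ∀ k : ℕ, x ∈ Icc (t 0) (t (k + 1)) → ∃ i ≤ k, x ∈ Icc (t i) (t (i + 1))
  | 0, hx => ⟨0, le_rfl, hx⟩
  | k + 1, hx => by
    by_cases hxk : x ≤ t (k + 1)
    · obtain ⟨i, hi, hxi⟩ := exists_mem_Icc_of_mem_Icc t k ⟨hx.1, hxk⟩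
      exact ⟨i, by omega, hxi⟩
    · exact ⟨k + 1, le_rfl, (not_le.mp hxk).le, hx.2⟩

theorem inFucik1D_of_lam1d_eq {a b lm μ : ℝ} {k : ℕ} {t : ℕ → ℝ} (ht : StrictMono t)
    (h0 : t 0 = a) (hk : t (k + 1) = b)
    (hlam : ∀ j ≤ k, lam1d (t (j + 1) - t j) = if Even j then lm else μ) :
    InFucik1D a b lm μ := by
  have hpiece (j : ℕ) : t j < t (j + 1) := ht (Nat.lt_succ_self j)
  obtain ⟨u, hu, hagree⟩ := exists_contDiff_gluing (n := 2) k ht.monotone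
    (fun _ _ => contDiff_mul_sin _ _ _)
    fun i _ _ hm => iteratedDeriv_alternatingArch_node (hpiece i) (hpiece (i + 1)) hm
  have hval : ∀ i ≤ k, ∀ x ∈ Icc (t i) (t (i + 1)), u x = alternatingArch t i x :=
    fun i hi x hx => hagree i hi x hx 0 (by norm_num)
  have hderiv2 : ∀ i ≤ k, ∀ x ∈ Icc (t i) (t (i + 1)),
      deriv (deriv u) x = iteratedDeriv 2 (alternatingArch t i) x := fun i hi x hx => by
    rw [← iteratedDeriv_one (f := u), ← iteratedDeriv_succ]
    exact hagree i hi x hx 2 le_rfl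
  have hmid : (t 0 + t 1) / 2 ∈ Ioo a b := by
    have := ht.monotone (show 1 ≤ k + 1 by omega)
    constructor <;> linarith [hpiece 0]
  refine ⟨u, hu, ?_, ?_, ⟨_, hmid, ?_⟩, fun x hx => ?_⟩
  · rw [← h0, hval 0 k.zero_le _ ⟨le_rfl, (hpiece 0).le⟩]
    simp [alternatingArch]
  · rw [← hk, hval k le_rfl _ ⟨(hpiece k).le, le_rfl⟩, alternatingArch,
      archFreq_mul_sub (hpiece k), sin_pi, mul_zero]
  · rw [hval 0 k.zero_le _ ⟨by linarith [hpiece 0], by linarith [hpiece 0]⟩,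
      alternatingArch_midpoint (hpiece 0)]
    exact div_ne_zero (by norm_num) (archFreq_pos (hpiece 0)).ne'
  · obtain ⟨i, hi, hxi⟩ := exists_mem_Icc_of_mem_Icc t k (h0 ▸ hk ▸ Ioo_subset_Icc_self hx)
    have hsign := neg_one_pow_mul_alternatingArch_nonneg (hpiece i) hxi
    rw [hderiv2 i hi x hxi, neg_iteratedDeriv_two_alternatingArch, hlam i hi, hval i hi x hxi]
    rcases Nat.even_or_odd i with he | ho
    · rw [he.neg_one_pow, one_mul] at hsign
      simp [he, hsign]
    · rw [ho.neg_one_pow, neg_one_mul, neg_nonneg] at hsign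
      simp [Nat.not_even_iff_odd.mpr ho, hsign]

theorem statement_12_general (a b : ℝ) (hab : a < b) (k : ℕ)
    (r : ℝ) (hr : 0 < r) :
    InFucik1D a b (r⁻¹ * ckr a b k r) (ckr a b k r) := by
  have hw := fucikWeight_pos hr
  rw [ckr_eq_optimalValue k hab hr]
  refine inFucik1D_of_lam1d_eq (strictMono_partitionOfLengths a (optimalLength_pos hab hw))
    (partitionOfLengths_zero _ _) (partitionOfLengths_optimalLength_add_one (k := k) hw)
    fun j _ => ?_
  rw [partitionOfLengths_succ_sub, ← mul_lam1d_optimalLength hab hw j, fucikWeight]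
  split_ifs
  · field_simp
  · rw [one_mul]

/-- In dimension one, for every `k ≥ 1` and `r > 0`, the pair
`(r⁻¹c_{k+1}(r), c_{k+1}(r))` belongs to the Fučík spectrum of `-d²/dx²` on
`H¹₀((a,b))`. -/
theorem statement_12 (a b : ℝ) (hab : a < b) (k : ℕ) (hk : 1 ≤ k)
    (r : ℝ) (hr : 0 < r) :
    InFucik1D a b (r⁻¹ * ckr a b k r) (ckr a b k r) :=
  statement_12_general a b hab k r hr
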